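/- For an NMVM random variable S = μ + Θγ + √Θ σ Z, the conditional tail expectation at level α is CTE_α(S) = μ + c* (1−α*)/(1−α) · (γ + σ² h_{S*}(s_α)), where c* = E[Θ], S* is the size-biased mixture version of S, α* = 1 − F̄_{S*}(s_α), and h_{S*} is the hazard function of S*. -/

import Mathlib

open MeasureTheory Set

/-- Density of the normal distribution with mean `m` and variance `v`. -/
noncomputable def ndens (m v x : ℝ) : ℝ :=
  (Real.sqrt (2 * Real.pi * v))⁻¹ * Real.exp (-(x - m) ^ 2 / (2 * v))

/-- Density of the univariate NMVM distribution with parameters `μ, γ, σ` and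
mixing density `q` on `(0, ∞)`. -/
noncomputable def mixdens (μ γ σ : ℝ) (q : ℝ → ℝ) (s : ℝ) : ℝ :=
  ∫ θ in Set.Ioi (0:ℝ), ndens (μ + θ * γ) (θ * σ ^ 2) s * q θ

/-- Survival function of the univariate NMVM distribution. -/
noncomputable def surv (μ γ σ : ℝ) (q : ℝ → ℝ) (c : ℝ) : ℝ :=
  ∫ s in Set.Ioi c, mixdens μ γ σ q s

/-- `k`-th tail moment `E[S^k | S > c]` of the univariate NMVM distribution. -/
noncomputable def tailmom (μ γ σ : ℝ) (q : ℝ → ℝ) (k : ℕ) (c : ℝ) : ℝ :=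
  (surv μ γ σ q c)⁻¹ * ∫ s in Set.Ioi c, s ^ k * mixdens μ γ σ q s

/-!
Given `Θ = θ`, `S` is Gaussian with mean `μ + θγ` and variance `θσ²`, and a Gaussian density `n`
with mean `m` and variance `v` satisfies `∫_c^∞ (x - m) n(x) dx = v n(c)`. Integrating over `θ`
(Fubini) gives
`∫_c^∞ s f_S(s) ds = μ F̄_S(c) + γ E[Θ] F̄_{S*}(c) + σ² E[Θ] f_{S*}(c)`,
because the factor `θ` turns `π` into the size-biased density `π*`; dividing by `F̄_S(c) = 1 - α`
gives the formula. Fubini applies because for `s ≠ μ` the conditional density `θ ↦ n_θ(s)` is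
bounded uniformly in `θ`: after exponential tilting in `γ` it is at most `1 / (√π |s - μ|)`.
-/

open Filter Topology

section Gaussian

variable (m : ℝ) {v : ℝ}

lemma ndens_nonneg (v x : ℝ) : 0 ≤ ndens m v x := by
  unfold ndens; positivity

lemma ndens_eq_gaussianPDFReal (hv : 0 < v) :
    ndens m v = ProbabilityTheory.gaussianPDFReal m v.toNNReal := by
  ext x
  simp [ndens, ProbabilityTheory.gaussianPDFReal, Real.coe_toNNReal v hv.le]

lemma integrable_ndens (hv : 0 < v) : Integrable (ndens m v) := by
  rw [ndens_eq_gaussianPDFReal m hv]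
  exact ProbabilityTheory.integrable_gaussianPDFReal m v.toNNReal

lemma integrable_sub_mul_ndens (hv : 0 < v) : Integrable fun x => (x - m) * ndens m v x := by
  have h := ((integrable_mul_exp_neg_mul_sq (b := (2 * v)⁻¹) (by positivity)).comp_sub_right
    m).const_mul (Real.sqrt (2 * Real.pi * v))⁻¹
  refine h.congr (Eventually.of_forall fun x => ?_)
  simp only [ndens]
  ring_nf

lemma hasDerivAt_ndens (hv : 0 < v) (x : ℝ) :
    HasDerivAt (ndens m v) (-((x - m) / v) * ndens m v x) x := by
  have hsq : HasDerivAt (fun y => (y - m) ^ 2) (2 * (x - m)) x := by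
    simpa using ((hasDerivAt_id x).sub_const m).fun_pow 2
  have hexp : HasDerivAt (fun y => -(y - m) ^ 2 / (2 * v)) (-((x - m) / v)) x :=
    hsq.neg.div_const (2 * v) |>.congr_deriv (by field_simp)
  exact (hexp.exp.const_mul (Real.sqrt (2 * Real.pi * v))⁻¹).congr_deriv (by rw [ndens]; ring)

lemma tendsto_ndens_atTop (hv : 0 < v) : Tendsto (ndens m v) atTop (𝓝 0) := by
  have h : Tendsto (fun x => -(x - m) ^ 2 / (2 * v)) atTop atBot := by
    refine Tendsto.atBot_div_const (by positivity) (tendsto_neg_atBot_iff.2 ?_)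
    exact (tendsto_pow_atTop two_ne_zero).comp (tendsto_atTop_add_const_right _ (-m) tendsto_id)
  have := (Real.tendsto_exp_atBot.comp h).const_mul (Real.sqrt (2 * Real.pi * v))⁻¹
  rwa [mul_zero] at this

lemma setIntegral_Ioi_sub_mul_ndens (hv : 0 < v) (c : ℝ) :
    ∫ x in Ioi c, (x - m) * ndens m v x = v * ndens m v c := by
  have hderiv (x : ℝ) : HasDerivAt (fun y => -v * ndens m v y) ((x - m) * ndens m v x) x :=
    ((hasDerivAt_ndens m hv x).const_mul (-v)).congr_deriv (by field_simp)
  rw [integral_Ioi_of_hasDerivAt_of_tendsto (hderiv c).continuousAt.continuousWithinAt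
    (fun x _ => hderiv x) (integrable_sub_mul_ndens m hv).integrableOn
    (by simpa using (tendsto_ndens_atTop m hv).const_mul (-v))]
  ring

lemma setIntegral_Ioi_mul_ndens (hv : 0 < v) (c : ℝ) :
    ∫ x in Ioi c, x * ndens m v x = m * (∫ x in Ioi c, ndens m v x) + v * ndens m v c := by
  have h (x : ℝ) : x * ndens m v x = (x - m) * ndens m v x + m * ndens m v x := by ring
  rw [integral_congr_ae (Eventually.of_forall h),
    integral_add (integrable_sub_mul_ndens m hv).integrableOn
      ((integrable_ndens m hv).const_mul m).integrableOn,
    setIntegral_Ioi_sub_mul_ndens m hv, integral_const_mul]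
  ring

lemma ndens_le_inv_abs_sub (hv : 0 < v) {x : ℝ} (hx : x ≠ m) :
    ndens m v x ≤ (Real.sqrt Real.pi * |x - m|)⁻¹ := by
  set y := (x - m) ^ 2 / (2 * v)
  have hy : 0 < y := by have := sub_ne_zero.2 hx; positivity
  have hsqrt_y : Real.sqrt y ≤ Real.exp y := by
    refine Real.sqrt_le_iff.2 ⟨(Real.exp_pos y).le, ?_⟩
    rw [sq, ← Real.exp_add]
    linarith [Real.add_one_le_exp (y + y)]
  have hprod : Real.sqrt (2 * Real.pi * v) * Real.sqrt y = Real.sqrt Real.pi * |x - m| := by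
    rw [← Real.sqrt_mul (by positivity), ← Real.sqrt_sq_eq_abs, ← Real.sqrt_mul Real.pi_pos.le]
    congr 1
    simp only [y]
    field_simp
  calc ndens m v x = (Real.sqrt (2 * Real.pi * v))⁻¹ * (Real.exp y)⁻¹ := by
        rw [ndens, ← Real.exp_neg, neg_div]
    _ ≤ (Real.sqrt (2 * Real.pi * v))⁻¹ * (Real.sqrt y)⁻¹ := by
        gcongr
    _ = (Real.sqrt Real.pi * |x - m|)⁻¹ := by rw [← mul_inv, hprod]

end Gaussian

lemma ndens_tilt {σ θ : ℝ} (hσ : σ ≠ 0) (hθ : 0 < θ) (μ γ s : ℝ) :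
    ndens (μ + θ * γ) (θ * σ ^ 2) s
      = Real.exp ((s - μ) * γ / σ ^ 2 - θ * γ ^ 2 / (2 * σ ^ 2)) * ndens μ (θ * σ ^ 2) s := by
  simp only [ndens]
  rw [mul_left_comm (Real.exp _), ← Real.exp_add]
  congr 2
  field_simp
  ring

lemma ndens_tilt_le_of_ne {σ θ : ℝ} (hσ : σ ≠ 0) (hθ : 0 < θ) (γ : ℝ) {μ s : ℝ} (hs : s ≠ μ) :
    ndens (μ + θ * γ) (θ * σ ^ 2) s
      ≤ Real.exp ((s - μ) * γ / σ ^ 2) * (Real.sqrt Real.pi * |s - μ|)⁻¹ := by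
  rw [ndens_tilt hσ hθ]
  refine mul_le_mul (Real.exp_le_exp.2 ?_) (ndens_le_inv_abs_sub μ (by positivity) hs)
    (ndens_nonneg _ _ _) (Real.exp_pos _).le
  linarith [show 0 ≤ θ * γ ^ 2 / (2 * σ ^ 2) by positivity]

section Fubini

variable {α β : Type*} [MeasurableSpace α] [MeasurableSpace β] {μ : Measure α} {ν : Measure β}
  [SFinite ν]

lemma integrable_prod_mul_of_ae_nonneg {F : α × β → ℝ} {w : α → ℝ}
    (hF0 : ∀ x, 0 ≤ᵐ[ν] fun y => F (x, y)) (hFm : AEStronglyMeasurable F (μ.prod ν))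
    (hwm : AEStronglyMeasurable w μ) (hsec : ∀ᵐ x ∂μ, Integrable (fun y => F (x, y)) ν)
    (hint : Integrable (fun x => w x * ∫ y, F (x, y) ∂ν) μ) :
    Integrable (fun z => w z.1 * F z) (μ.prod ν) := by
  refine (integrable_prod_iff (hwm.comp_fst.mul hFm)).2
    ⟨by filter_upwards [hsec] with x hx using hx.const_mul (w x), hint.norm.congr ?_⟩
  refine Eventually.of_forall fun x => ?_
  simp only [Pi.mul_apply, norm_mul, Real.norm_eq_abs, integral_const_mul]
  rw [abs_of_nonneg (integral_nonneg_of_ae (hF0 x))]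
  congr 1
  exact integral_congr_ae <| (hF0 x).mono fun y hy => (abs_of_nonneg hy).symm

end Fubini

/-- Joint density of `(S, Θ)` at `(s, θ)`. -/
noncomputable def mixKernel (μ γ σ : ℝ) (q : ℝ → ℝ) (z : ℝ × ℝ) : ℝ :=
  ndens (μ + z.2 * γ) (z.2 * σ ^ 2) z.1 * q z.2

section Mixture

variable {μ γ σ : ℝ} {q : ℝ → ℝ}

lemma surv_eq_integral_mixKernel (c : ℝ) :
    surv μ γ σ q c = ∫ s in Ioi c, ∫ θ in Ioi 0, mixKernel μ γ σ q (s, θ) := rfl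

lemma measurable_ndens_mixture (μ γ σ : ℝ) :
    Measurable fun z : ℝ × ℝ => ndens (μ + z.2 * γ) (z.2 * σ ^ 2) z.1 := by
  unfold ndens; fun_prop

lemma integrableOn_mixKernel_section (hσ : σ ≠ 0) (hq : IntegrableOn q (Ioi 0)) {s : ℝ}
    (hs : s ≠ μ) : IntegrableOn (fun θ => mixKernel μ γ σ q (s, θ)) (Ioi 0) := by
  refine (hq.norm.const_mul
      (Real.exp ((s - μ) * γ / σ ^ 2) * (Real.sqrt Real.pi * |s - μ|)⁻¹)).mono'
    (((measurable_ndens_mixture μ γ σ).comp measurable_prodMk_left).aestronglyMeasurable.mul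
      hq.aestronglyMeasurable) ?_
  filter_upwards [ae_restrict_mem measurableSet_Ioi] with θ hθ
  rw [mixKernel, norm_mul, Real.norm_of_nonneg (ndens_nonneg _ _ _)]
  gcongr
  exact ndens_tilt_le_of_ne hσ hθ γ hs

lemma integrable_mul_mixKernel (hσ : σ ≠ 0) (hq : IntegrableOn q (Ioi 0))
    (hq0 : ∀ θ > 0, 0 ≤ q θ) {w : ℝ → ℝ} (hw : Measurable w) {c : ℝ}
    (hint : IntegrableOn (fun s => w s * mixdens μ γ σ q s) (Ioi c)) :
    Integrable (fun z => w z.1 * mixKernel μ γ σ q z)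
      ((volume.restrict (Ioi c)).prod (volume.restrict (Ioi 0))) := by
  refine integrable_prod_mul_of_ae_nonneg (fun s => ?_)
    ((measurable_ndens_mixture μ γ σ).aestronglyMeasurable.mul hq.aestronglyMeasurable.comp_snd)
    hw.aestronglyMeasurable ?_ hint
  · filter_upwards [ae_restrict_mem measurableSet_Ioi] with θ hθ
    exact mul_nonneg (ndens_nonneg _ _ _) (hq0 θ hθ)
  · filter_upwards [ae_restrict_of_ae (Measure.ae_ne volume μ)] with s hs
    exact integrableOn_mixKernel_section hσ hq hs

lemma integrable_mixKernel (hσ : σ ≠ 0) (hq : IntegrableOn q (Ioi 0))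
    (hq0 : ∀ θ > 0, 0 ≤ q θ) {c : ℝ} (hint : IntegrableOn (mixdens μ γ σ q) (Ioi c)) :
    Integrable (mixKernel μ γ σ q)
      ((volume.restrict (Ioi c)).prod (volume.restrict (Ioi 0))) := by
  simpa using integrable_mul_mixKernel hσ hq hq0 measurable_const (w := fun _ => 1)
    (by simpa using hint)

lemma setIntegral_Ioi_mul_mixKernel_section (hσ : σ ≠ 0) (c : ℝ) {θ : ℝ} (hθ : 0 < θ) :
    ∫ s in Ioi c, s * mixKernel μ γ σ q (s, θ)
      = (μ + θ * γ) * (∫ s in Ioi c, mixKernel μ γ σ q (s, θ))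
        + σ ^ 2 * mixKernel μ γ σ (fun θ => θ * q θ) (c, θ) := by
  simp only [mixKernel, ← mul_assoc, integral_mul_const]
  rw [setIntegral_Ioi_mul_ndens _ (by positivity)]
  ring

theorem setIntegral_Ioi_mul_mixdens (hσ : σ ≠ 0) (hq0 : ∀ θ > 0, 0 ≤ q θ) {c : ℝ}
    (hq : IntegrableOn q (Ioi 0)) (hθq : IntegrableOn (fun θ => θ * q θ) (Ioi 0))
    (hf : IntegrableOn (mixdens μ γ σ q) (Ioi c))
    (hθf : IntegrableOn (mixdens μ γ σ fun θ => θ * q θ) (Ioi c))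
    (hsf : IntegrableOn (fun s => s * mixdens μ γ σ q s) (Ioi c)) :
    ∫ s in Ioi c, s * mixdens μ γ σ q s
      = μ * surv μ γ σ q c + γ * surv μ γ σ (fun θ => θ * q θ) c
        + σ ^ 2 * mixdens μ γ σ (fun θ => θ * q θ) c := by
  have hθq0 : ∀ θ > 0, 0 ≤ θ * q θ := fun θ hθ => mul_nonneg hθ.le (hq0 θ hθ)
  have hX := integrable_mul_mixKernel hσ hq hq0 measurable_id hsf
  have hF := integrable_mixKernel hσ hq hq0 hf
  have hG := integrable_mixKernel hσ hθq hθq0 hθf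
  set A : ℝ → ℝ := fun θ => ∫ s in Ioi c, s * mixKernel μ γ σ q (s, θ)
  set B : ℝ → ℝ := fun θ => ∫ s in Ioi c, mixKernel μ γ σ q (s, θ)
  set C : ℝ → ℝ := fun θ => ∫ s in Ioi c, mixKernel μ γ σ (fun θ => θ * q θ) (s, θ)
  have hA : Integrable A (volume.restrict (Ioi 0)) := hX.integral_prod_right
  have hB : Integrable (fun θ => μ * B θ) (volume.restrict (Ioi 0)) :=
    hF.integral_prod_right.const_mul μ
  have hC : Integrable (fun θ => γ * C θ) (volume.restrict (Ioi 0)) :=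
    hG.integral_prod_right.const_mul γ
  have hinner : ∀ θ ∈ Ioi (0 : ℝ),
      A θ - μ * B θ - γ * C θ = σ ^ 2 * mixKernel μ γ σ (fun θ => θ * q θ) (c, θ) := by
    intro θ hθ
    simp only [A, B, C]
    rw [setIntegral_Ioi_mul_mixKernel_section hσ c hθ]
    simp only [mixKernel, integral_mul_const]
    ring
  calc ∫ s in Ioi c, s * mixdens μ γ σ q s
      = ∫ θ in Ioi 0, A θ := by
        simp_rw [mixdens, ← integral_const_mul]
        exact integral_integral_swap hX
    _ = (∫ θ in Ioi 0, A θ - μ * B θ - γ * C θ)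
          + μ * (∫ θ in Ioi 0, B θ) + γ * ∫ θ in Ioi 0, C θ := by
        rw [integral_sub (hA.sub' hB) hC, integral_sub hA hB, integral_const_mul,
          integral_const_mul]
        ring
    _ = σ ^ 2 * mixdens μ γ σ (fun θ => θ * q θ) c
          + μ * surv μ γ σ q c + γ * surv μ γ σ (fun θ => θ * q θ) c := by
        rw [setIntegral_congr_fun measurableSet_Ioi hinner, integral_const_mul,
          surv_eq_integral_mixKernel, surv_eq_integral_mixKernel,
          integral_integral_swap (f := fun s θ => mixKernel μ γ σ q (s, θ)) hF,
          integral_integral_swap (f := fun s θ => mixKernel μ γ σ (fun θ => θ * q θ) (s, θ)) hG]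
        rfl
    _ = _ := by ring

lemma mixdens_div_const (q : ℝ → ℝ) (c s : ℝ) :
    mixdens μ γ σ (fun θ => q θ / c) s = mixdens μ γ σ q s / c := by
  simp only [mixdens, mul_div_assoc', integral_div]

lemma surv_div_const (q : ℝ → ℝ) (c x : ℝ) :
    surv μ γ σ (fun θ => q θ / c) x = surv μ γ σ q x / c := by
  simp only [surv, mixdens_div_const, integral_div]

end Mixture

/-- CTE of a univariate NMVM random variable. -/
theorem nmvm_cte
    (μ γ σ α sα : ℝ) (hσ : 0 < σ) (p : ℝ → ℝ)
    (hp0 : ∀ θ, 0 ≤ p θ) (hp1 : ∫ θ in Set.Ioi (0:ℝ), p θ = 1)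
    (cstar : ℝ) (hcstar : cstar = ∫ θ in Set.Ioi (0:ℝ), θ * p θ) (hcpos : 0 < cstar)
    (pstar : ℝ → ℝ) (hpstar : pstar = fun θ => θ * p θ / cstar)
    (hα01 : α ∈ Set.Ioo (0:ℝ) 1)
    (hquant : surv μ γ σ p sα = 1 - α)
    (αstar : ℝ) (hαstar : αstar = 1 - surv μ γ σ pstar sα)
    (hspos : 0 < surv μ γ σ pstar sα)
    (hintp : IntegrableOn (fun s => s * mixdens μ γ σ p s) (Set.Ioi sα)) :
    tailmom μ γ σ p 1 sα
      = μ + cstar * (1 - αstar) / (1 - α) *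
          (γ + σ ^ 2 * (mixdens μ γ σ pstar sα / surv μ γ σ pstar sα)) := by
  subst hpstar hαstar
  have h1α : 1 - α ≠ 0 := sub_ne_zero.2 hα01.2.ne'
  -- A non-integrable function has Bochner integral `0`, so each nonzero integral in the
  -- hypotheses certifies integrability.
  have hp : IntegrableOn p (Ioi 0) := Integrable.of_integral_ne_zero (by simp [hp1])
  have hθp : IntegrableOn (fun θ => θ * p θ) (Ioi 0) :=
    Integrable.of_integral_ne_zero (hcstar ▸ hcpos.ne')
  have hf : IntegrableOn (mixdens μ γ σ p) (Ioi sα) :=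
    Integrable.of_integral_ne_zero (by rw [← surv, hquant]; exact h1α)
  have hθf : IntegrableOn (mixdens μ γ σ fun θ => θ * p θ) (Ioi sα) := by
    have h := (Integrable.of_integral_ne_zero hspos.ne').const_mul cstar
    simp only [mixdens_div_const, mul_div_cancel₀ _ hcpos.ne'] at h
    exact h
  rw [surv_div_const] at hspos ⊢
  have hS : surv μ γ σ (fun θ => θ * p θ) sα ≠ 0 :=
    ((div_pos_iff_of_pos_right hcpos).1 hspos).ne'
  rw [tailmom, hquant, mixdens_div_const]
  simp only [pow_one]
  rw [setIntegral_Ioi_mul_mixdens hσ.ne' (fun θ _ => hp0 θ) hp hθp hf hθf hintp, hquant]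
  field_simp
  ring
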